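/- Let n ≥ 2, let u ∈ ℝⁿ be unit timelike, and let R be a symmetric real n×n matrix (a Ricci-like tensor). Then θ_uᵀ R θ_u = R (R is purely electric with respect to u) if and only if Ru is a scalar multiple of ηu, i.e., if and only if u is an eigenvector of the operator ηR. Moreover, in this case ηR is diagonalizable over ℝ: there exists a basis of ℝⁿ consisting of eigenvectors of ηR, and in particular all eigenvalues of ηR are real. -/

import Mathlib

/-!
Since `θ_u` is an involution, `R` is purely electric iff `θ_uᵀ R = R θ_u`. As `θ_u` is the identity
plus the rank-one matrix `2 u (ηu)ᵀ`, this says that `(Ru)(ηu)ᵀ` is symmetric, i.e. `Ru ∥ ηu`.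
In that case the Ricci operator `ηR` is self-adjoint for the form `H = η θ_u = η + 2 (ηu)(ηu)ᵀ`,
because `H (ηR) = θ_uᵀ R = R θ_u = (ηR)ᵀ H`; and `H` is positive definite by the reverse
Cauchy–Schwarz inequality for the timelike `u`. Conjugating by `√H` turns `ηR` into a symmetric
matrix, which has a real eigenbasis and real spectrum.
-/

open Matrix

noncomputable section

/-- The Minkowski metric `η = diag(-1, 1, …, 1)` on `ℝⁿ`. -/
def eta (n : ℕ) : Matrix (Fin n) (Fin n) ℝ :=
  Matrix.diagonal fun i => if i.val = 0 then (-1 : ℝ) else 1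

/-- The reflection `θ_u = I + 2u(ηu)ᵀ` sending `u ↦ -u` and fixing `u^⊥`. -/
def theta {n : ℕ} (u : Fin n → ℝ) : Matrix (Fin n) (Fin n) ℝ :=
  1 + (2 : ℝ) • vecMulVec u ((eta n).mulVec u)

section

variable {ι K : Type*} [Field K]

theorem vecMulVec_eq_vecMulVec_swap_iff {a w : ι → K} (hw : w ≠ 0) :
    vecMulVec a w = vecMulVec w a ↔ ∃ c : K, a = c • w := by
  constructor
  · intro h
    obtain ⟨j, hj⟩ : ∃ j, w j ≠ 0 := Function.ne_iff.mp hw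
    refine ⟨a j / w j, funext fun i => ?_⟩
    have hij := congrFun (congrFun h i) j
    simp only [vecMulVec_apply] at hij
    simp only [Pi.smul_apply, smul_eq_mul]
    field_simp
    linear_combination hij
  · rintro ⟨c, rfl⟩
    rw [smul_vecMulVec, vecMulVec_smul]

variable [Fintype ι] [DecidableEq ι]

theorem transpose_mul_mul_eq_self_iff {θ R : Matrix ι ι K} (hθ : θ * θ = 1) :
    θᵀ * R * θ = R ↔ θᵀ * R = R * θ := by
  constructor
  · intro h
    calc θᵀ * R = θᵀ * R * θ * θ := by rw [Matrix.mul_assoc _ θ θ, hθ, Matrix.mul_one]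
      _ = R * θ := by rw [h]
  · intro h
    rw [h, Matrix.mul_assoc, hθ, Matrix.mul_one]

end

section Spectral

variable {ι : Type*} [Fintype ι]

open scoped ComplexOrder in
theorem Matrix.IsHermitian.star_eq_of_mulVec_eq_smul {𝕜 : Type*} [RCLike 𝕜]
    {A : Matrix ι ι 𝕜} (hA : A.IsHermitian) {v : ι → 𝕜} (hv : v ≠ 0) {μ : 𝕜}
    (h : A *ᵥ v = μ • v) : star μ = μ := by
  have h₁ : star v ⬝ᵥ A *ᵥ v = μ * (star v ⬝ᵥ v) := by
    rw [h, dotProduct_smul, smul_eq_mul]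
  have h₂ : star v ⬝ᵥ A *ᵥ v = star μ * (star v ⬝ᵥ v) := by
    rw [dotProduct_mulVec, ← hA.eq, ← star_mulVec, h, star_smul, smul_dotProduct,
      smul_eq_mul]
  exact mul_right_cancel₀ (mt dotProduct_star_self_eq_zero.mp hv) (h₂.symm.trans h₁)

variable [DecidableEq ι]

open scoped MatrixOrder in
theorem Matrix.PosDef.exists_isHermitian_of_mul_eq_transpose_mul {H M : Matrix ι ι ℝ}
    (hH : H.PosDef) (h : H * M = Mᵀ * H) :
    ∃ S N : Matrix ι ι ℝ, IsUnit S ∧ S * M = N * S ∧ N.IsHermitian := by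
  set S := CFC.sqrt H
  have hSS : S * S = H := CFC.sqrt_mul_sqrt_self H (nonneg_iff_posSemidef.2 hH.posSemidef)
  have hST : Sᵀ = S := by
    rw [← conjTranspose_eq_transpose_of_trivial]
    exact (nonneg_iff_posSemidef.1 (CFC.sqrt_nonneg H)).isHermitian.eq
  have hS : IsUnit S := (CFC.isUnit_sqrt_iff H).2 hH.isUnit
  have := hS.invertible
  refine ⟨S, S * M * S⁻¹, hS, by rw [inv_mul_cancel_right_of_invertible], ?_⟩
  rw [IsHermitian, conjTranspose_eq_transpose_of_trivial, transpose_mul, transpose_mul,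
    transpose_nonsing_inv, hST]
  calc S⁻¹ * (Mᵀ * S) = S⁻¹ * (Mᵀ * (S * S)) * S⁻¹ := by
        rw [← Matrix.mul_assoc Mᵀ, Matrix.mul_assoc S⁻¹, mul_inv_cancel_right_of_invertible]
    _ = S⁻¹ * (S * (S * M)) * S⁻¹ := by rw [hSS, ← h, ← hSS, Matrix.mul_assoc S S M]
    _ = S * M * S⁻¹ := by rw [inv_mul_cancel_left_of_invertible]

variable {S M N : Matrix ι ι ℝ} [Invertible S]

theorem exists_eigenbasis_of_mul_eq_mul_of_isHermitian (h : S * M = N * S)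
    (hN : N.IsHermitian) :
    ∃ b : Module.Basis ι ℝ (ι → ℝ), ∀ i, ∃ μ : ℝ, M *ᵥ b i = μ • b i := by
  have hMS : M * S⁻¹ = S⁻¹ * N := by
    calc M * S⁻¹ = S⁻¹ * (S * M) * S⁻¹ := by rw [inv_mul_cancel_left_of_invertible]
      _ = S⁻¹ * N := by rw [h, Matrix.mul_assoc, mul_inv_cancel_right_of_invertible]
  let e := (WithLp.linearEquiv 2 ℝ (ι → ℝ)).trans (S⁻¹.toLinearEquiv' inferInstance)
  refine ⟨hN.eigenvectorBasis.toBasis.map e, fun i => ⟨hN.eigenvalues i, ?_⟩⟩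
  have hb : hN.eigenvectorBasis.toBasis.map e i = S⁻¹ *ᵥ hN.eigenvectorBasis i := rfl
  rw [hb, mulVec_mulVec, hMS, ← mulVec_mulVec, hN.mulVec_eigenvectorBasis, mulVec_smul]

theorem im_eq_zero_of_mul_eq_mul_of_isHermitian (h : S * M = N * S) (hN : N.IsHermitian)
    {μ : ℂ} {v : ι → ℂ} (hv : v ≠ 0) (hμ : M.map (↑) *ᵥ v = μ • v) : μ.im = 0 := by
  let f : ℝ →+* ℂ := Complex.ofRealHom
  have hSv : S.map f *ᵥ v ≠ 0 := by
    intro h0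
    have hS : S⁻¹.map f * S.map f = 1 := by
      rw [← Matrix.map_mul, inv_mul_of_invertible, Matrix.map_one _ f.map_zero f.map_one]
    rw [← one_mulVec v, ← hS, ← mulVec_mulVec, h0, mulVec_zero] at hv
    exact hv rfl
  have hNc : (N.map f).IsHermitian := hN.map f fun x => (Complex.conj_ofReal x).symm
  have hSμ : N.map f *ᵥ (S.map f *ᵥ v) = μ • (S.map f *ᵥ v) := by
    rw [mulVec_mulVec, ← Matrix.map_mul, ← h, Matrix.map_mul, ← mulVec_mulVec]
    exact (congrArg _ hμ).trans (mulVec_smul _ μ v)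
  exact Complex.conj_eq_iff_im.mp (hNc.star_eq_of_mulVec_eq_smul hSv hSμ)

end Spectral

section Minkowski

variable {n : ℕ}

theorem eta_transpose : (eta n)ᵀ = eta n := diagonal_transpose _

theorem eta_mul_eta : eta n * eta n = 1 := by
  rw [eta, diagonal_mul_diagonal, ← diagonal_one]
  congr 1
  funext i
  split_ifs <;> norm_num

theorem eta_mulVec_eta_mulVec (v : Fin n → ℝ) : eta n *ᵥ (eta n *ᵥ v) = v := by
  rw [mulVec_mulVec, eta_mul_eta, one_mulVec]

theorem theta_transpose (u : Fin n → ℝ) :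
    (theta u)ᵀ = 1 + (2 : ℝ) • vecMulVec (eta n *ᵥ u) u := by
  rw [theta, transpose_add, transpose_one, transpose_smul, transpose_vecMulVec]

theorem theta_mul_theta {u : Fin n → ℝ} (hu : u ⬝ᵥ eta n *ᵥ u = -1) :
    theta u * theta u = 1 := by
  rw [theta, add_mul, one_mul, mul_add, mul_one, Matrix.smul_mul, Matrix.mul_smul,
    vecMulVec_mul_vecMulVec, dotProduct_comm, hu, vecMulVec_smul, smul_smul]
  module

theorem eta_mul_theta_mul_eta (u : Fin n → ℝ) : eta n * theta u * eta n = (theta u)ᵀ := by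
  rw [theta_transpose, theta, mul_add, add_mul, mul_one, eta_mul_eta, Matrix.mul_smul,
    Matrix.smul_mul, mul_vecMulVec, vecMulVec_mul, ← mulVec_transpose, eta_transpose,
    eta_mulVec_eta_mulVec]

theorem eta_mul_theta (u : Fin n → ℝ) :
    eta n * theta u = eta n + (2 : ℝ) • vecMulVec (eta n *ᵥ u) (eta n *ᵥ u) := by
  rw [theta, mul_add, mul_one, Matrix.mul_smul, mul_vecMulVec]

theorem transpose_theta_mul_mul_theta_eq_self_iff {u : Fin n → ℝ} (hu : u ⬝ᵥ eta n *ᵥ u = -1)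
    {R : Matrix (Fin n) (Fin n) ℝ} (hR : Rᵀ = R) :
    (theta u)ᵀ * R * theta u = R ↔ ∃ c : ℝ, R *ᵥ u = c • (eta n *ᵥ u) := by
  have hw : eta n *ᵥ u ≠ 0 := by
    intro h0
    rw [h0, dotProduct_zero] at hu
    norm_num at hu
  rw [transpose_mul_mul_eq_self_iff (theta_mul_theta hu), theta_transpose, theta, add_mul,
    one_mul, mul_add, mul_one, Matrix.smul_mul, Matrix.mul_smul, vecMulVec_mul, mul_vecMulVec,
    ← mulVec_transpose, hR, add_right_inj, smul_right_inj two_ne_zero, eq_comm,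
    vecMulVec_eq_vecMulVec_swap_iff hw]

theorem dotProduct_eta_mulVec_succ {m : ℕ} (a b : Fin (m + 1) → ℝ) :
    a ⬝ᵥ eta (m + 1) *ᵥ b = -(a 0 * b 0) + Fin.tail a ⬝ᵥ Fin.tail b := by
  simp [dotProduct, Fin.sum_univ_succ, eta, mulVec_diagonal, Fin.tail]

theorem zero_lt_dotProduct_eta_add_two_mul_sq {u x : Fin n → ℝ} (hu : u ⬝ᵥ eta n *ᵥ u = -1)
    (hx : x ≠ 0) : 0 < x ⬝ᵥ eta n *ᵥ x + 2 * (u ⬝ᵥ eta n *ᵥ x) ^ 2 := by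
  cases n with
  | zero => simp at hu
  | succ m =>
    rw [dotProduct_eta_mulVec_succ] at hu
    rw [dotProduct_eta_mulVec_succ, dotProduct_eta_mulVec_succ]
    set B := Fin.tail u ⬝ᵥ Fin.tail u
    set S := Fin.tail x ⬝ᵥ Fin.tail x
    set T := Fin.tail u ⬝ᵥ Fin.tail x
    have hB : 0 ≤ B := dotProduct_self_star_nonneg _
    have hS : 0 ≤ S := dotProduct_self_star_nonneg _
    have hT : T ^ 2 ≤ B * S := by
      simp only [B, S, T, dotProduct, ← sq]
      exact Finset.sum_mul_sq_le_sq_mul_sq _ _ _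
    have hxS : 0 < x 0 ^ 2 + S := by
      by_contra! hle
      have hx0 : x 0 = 0 := by nlinarith
      have hS0 : Fin.tail x = 0 := dotProduct_self_eq_zero.mp (by nlinarith : S = 0)
      exact hx (funext fun i => Fin.cases hx0 (congrFun hS0) i)
    -- complete the square in `x 0` using `u 0 ^ 2 = 1 + B`; Cauchy–Schwarz makes the rest `≥ S`
    have key : (1 + 2 * B) * (-(x 0 * x 0) + S + 2 * (-(u 0 * x 0) + T) ^ 2)
        = ((1 + 2 * B) * x 0 - 2 * u 0 * T) ^ 2 + ((1 + 2 * B) * S - 2 * T ^ 2) := by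
      linear_combination (4 * T ^ 2 - 2 * (1 + 2 * B) * x 0 ^ 2) * hu
    have hpos : 0 < ((1 + 2 * B) * x 0 - 2 * u 0 * T) ^ 2 + S := by
      rcases hS.lt_or_eq with hS | hS
      · positivity
      · have hT0 : T = 0 := by nlinarith
        have hx0 : 0 < x 0 ^ 2 := by linarith
        rw [hT0, ← hS, mul_zero, sub_zero, add_zero, mul_pow]
        exact mul_pos (by positivity) hx0
    refine pos_of_mul_pos_right (a := 1 + 2 * B) ?_ (by positivity)
    nlinarith

theorem posDef_eta_mul_theta {u : Fin n → ℝ} (hu : u ⬝ᵥ eta n *ᵥ u = -1) :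
    (eta n * theta u).PosDef := by
  rw [posDef_iff_dotProduct_mulVec, eta_mul_theta]
  refine ⟨?_, fun x hx => ?_⟩
  · rw [IsHermitian, conjTranspose_eq_transpose_of_trivial, transpose_add, eta_transpose,
      transpose_smul, transpose_vecMulVec]
  · have hux : eta n *ᵥ u ⬝ᵥ x = u ⬝ᵥ eta n *ᵥ x := by
      rw [dotProduct_mulVec, ← mulVec_transpose, eta_transpose]
    calc 0 < x ⬝ᵥ eta n *ᵥ x + 2 * (u ⬝ᵥ eta n *ᵥ x) ^ 2 :=
          zero_lt_dotProduct_eta_add_two_mul_sq hu hx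
      _ = star x ⬝ᵥ (eta n + (2 : ℝ) • vecMulVec (eta n *ᵥ u) (eta n *ᵥ u)) *ᵥ x := by
          rw [star_trivial, add_mulVec, smul_mulVec, vecMulVec_mulVec, op_smul_eq_smul, hux,
            dotProduct_add, dotProduct_smul, dotProduct_smul, dotProduct_comm x (eta n *ᵥ u), hux,
            smul_eq_mul, smul_eq_mul]
          ring

theorem eta_mul_theta_mul_eta_mul_eq_transpose_mul {u : Fin n → ℝ}
    (hu : u ⬝ᵥ eta n *ᵥ u = -1) {R : Matrix (Fin n) (Fin n) ℝ} (hR : Rᵀ = R)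
    (hPE : (theta u)ᵀ * R * theta u = R) :
    eta n * theta u * (eta n * R) = (eta n * R)ᵀ * (eta n * theta u) :=
  calc eta n * theta u * (eta n * R) = eta n * theta u * eta n * R := by
        simp only [Matrix.mul_assoc]
    _ = R * theta u := by
        rw [eta_mul_theta_mul_eta, ← transpose_mul_mul_eq_self_iff (theta_mul_theta hu), hPE]
    _ = R * (eta n * eta n) * theta u := by rw [eta_mul_eta, Matrix.mul_one]
    _ = (eta n * R)ᵀ * (eta n * theta u) := by
        rw [transpose_mul, hR, eta_transpose]
        simp only [Matrix.mul_assoc]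

end Minkowski

theorem stmt14_general {n : ℕ} (u : Fin n → ℝ)
    (hu : u ⬝ᵥ (eta n).mulVec u = -1)
    (R : Matrix (Fin n) (Fin n) ℝ) (hR : Rᵀ = R) :
    ((theta u)ᵀ * R * theta u = R ↔
      ∃ c : ℝ, R.mulVec u = c • ((eta n).mulVec u)) ∧
    ((theta u)ᵀ * R * theta u = R →
      (∃ b : Module.Basis (Fin n) ℝ (Fin n → ℝ), ∀ i, ∃ μ : ℝ,
        (eta n * R).mulVec (b i) = μ • (b i)) ∧
      (∀ μ : ℂ, (∃ v : Fin n → ℂ, v ≠ 0 ∧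
          ((eta n * R).map (fun x => (x : ℂ))).mulVec v = μ • v) → μ.im = 0)) := by
  refine ⟨transpose_theta_mul_mul_theta_eq_self_iff hu hR, fun hPE => ?_⟩
  obtain ⟨S, N, hS, hSN, hN⟩ :=
    (posDef_eta_mul_theta hu).exists_isHermitian_of_mul_eq_transpose_mul
      (eta_mul_theta_mul_eta_mul_eq_transpose_mul hu hR hPE)
  have := hS.invertible
  exact ⟨exists_eigenbasis_of_mul_eq_mul_of_isHermitian hSN hN,
    fun μ ⟨v, hv, hμ⟩ => im_eq_zero_of_mul_eq_mul_of_isHermitian hSN hN hv hμ⟩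

/-- A symmetric (Ricci-like) matrix `R` is purely electric with respect to a unit
timelike `u` iff `u` is an eigenvector of the Ricci operator `ηR` (i.e. `Ru` is a
scalar multiple of `ηu`); moreover, in this case `ηR` is diagonalizable over `ℝ`
(there is a basis of eigenvectors of `ηR`), and in particular all (complex)
eigenvalues of `ηR` are real. -/
theorem stmt14 {n : ℕ} (hn : 2 ≤ n) (u : Fin n → ℝ)
    (hu : u ⬝ᵥ (eta n).mulVec u = -1)
    (R : Matrix (Fin n) (Fin n) ℝ) (hR : Rᵀ = R) :
    ((theta u)ᵀ * R * theta u = R ↔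
      ∃ c : ℝ, R.mulVec u = c • ((eta n).mulVec u)) ∧
    ((theta u)ᵀ * R * theta u = R →
      (∃ b : Module.Basis (Fin n) ℝ (Fin n → ℝ), ∀ i, ∃ μ : ℝ,
        (eta n * R).mulVec (b i) = μ • (b i)) ∧
      (∀ μ : ℂ, (∃ v : Fin n → ℂ, v ≠ 0 ∧
          ((eta n * R).map (fun x => (x : ℂ))).mulVec v = μ • v) → μ.im = 0)) :=
  stmt14_general u hu R hR

end
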